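/- Let γ : 𝕋¹ → N be a closed geodesic in N ⊂ ℝ^N and let γ̄ denote the one-dimensional submanifold γ(𝕋¹). Suppose φ : [0,T] × 𝕋¹ → N and f take values tangent to γ̄, with φ(t,x) = γ(ϕ(t,x)) and f(t,x) = f₀(t,x) γ_s(ϕ(t,x)) for scalar functions ϕ, f₀ with ϕ(t, 2π) = ϕ(t,0) + 2πK for a fixed integer K (the degree). Then (φ, f) solves the controlled wave maps equation □φ - Π(φ)(∂_ν φ, ∂^ν φ) = χ_ω Π_T(φ) f if and only if (ϕ, f₀) solves the linear wave equation □ϕ = χ_ω f₀ with the boundary condition ϕ(t, 2π) - ϕ(t, 0) = 2πK. -/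

import Mathlib

open MeasureTheory Real Function
noncomputable section

/-- Euclidean space `ℝ^n`, the ambient space of the isometric (Nash) embedding. -/
abbrev Euc (n : ℕ) : Type := EuclideanSpace ℝ (Fin n)

/-- Real inner product on `ℝ^n`. -/
def rip {n : ℕ} (v w : Euc n) : ℝ := inner ℝ v w

/-- Orthogonal projection onto a submodule (e.g. a tangent space `T_p N ⊆ ℝ^n`). -/
def tproj {n : ℕ} (U : Submodule ℝ (Euc n)) (v : Euc n) : Euc n :=
  (U.orthogonalProjection v : Euc n)

/-- The (extended) second fundamental form in extrinsic coordinates: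
`Π(p)(v,w) = -∑_{j,k} S_{jk}(p) v^j w^k`. -/
def sff {n : ℕ} (S : Fin n → Fin n → Euc n → Euc n) (p v w : Euc n) : Euc n :=
  -∑ j, ∑ k, (v j * w k) • S j k p

/-- The geodesic / harmonic map equation in extrinsic coordinates:
`γ'' + S_{jk}(γ) γ'^j γ'^k = 0`, i.e. `Δγ - Π(γ)(γ_x, γ_x) = 0`. -/
def IsGeodesicEq {n : ℕ} (S : Fin n → Fin n → Euc n → Euc n) (γ : ℝ → Euc n) : Prop :=
  ∀ x, deriv (deriv γ) x + ∑ j, ∑ k, (deriv γ x j * deriv γ x k) • S j k (γ x) = 0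

/-- The Jacobi operator along `γ`:
`L_γ φ = Δφ + φ^r ∂_r S_{jk}(γ) γ_x^j γ_x^k + 2 S_{jk}(γ) γ_x^j ∂_x φ^k`
(the middle term is the directional derivative of `S_{jk}` at `γ x` in direction `φ x`). -/
def jacobiOp {n : ℕ} (S : Fin n → Fin n → Euc n → Euc n) (γ φ : ℝ → Euc n) (x : ℝ) :
    Euc n :=
  deriv (deriv φ) x
    + ∑ j, ∑ k, (deriv γ x j * deriv γ x k) • fderiv ℝ (S j k) (γ x) (φ x)
    + (2:ℝ) • ∑ j, ∑ k, (deriv γ x j * deriv φ x k) • S j k (γ x)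

/-- Partial derivative in time of a space-time function. -/
def pt {E : Type*} [NormedAddCommGroup E] [NormedSpace ℝ E]
    (φ : ℝ → ℝ → E) (t x : ℝ) : E := deriv (fun s => φ s x) t

/-- Partial derivative in space of a space-time function. -/
def px {E : Type*} [NormedAddCommGroup E] [NormedSpace ℝ E]
    (φ : ℝ → ℝ → E) (t x : ℝ) : E := deriv (fun y => φ t y) x

private lemma key_chain {n : ℕ} (γ : ℝ → Euc n) (hγ : ContDiff ℝ (⊤ : ℕ∞) γ) (ψ : ℝ → ℝ)
    (hψ : ContDiff ℝ 2 ψ) (t : ℝ) :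
    (deriv (fun s => γ (ψ s)) t = deriv ψ t • deriv γ (ψ t)) ∧
    deriv (deriv (fun s => γ (ψ s))) t
      = deriv (deriv ψ) t • deriv γ (ψ t)
        + (deriv ψ t * deriv ψ t) • deriv (deriv γ) (ψ t) := by
  have h2 : (2 : WithTop ℕ∞) = 1 + 1 := rfl
  have hψd : Differentiable ℝ ψ := hψ.differentiable (by norm_num)
  have hψ' : ContDiff ℝ 1 (deriv ψ) := by
    rw [h2, contDiff_succ_iff_deriv] at hψ
    exact hψ.2.2
  have hγd : Differentiable ℝ γ := hγ.differentiable (by norm_num)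
  have hγ' := (contDiff_infty_iff_deriv.mp (hγ.of_le (by simp))).2
  have hγ'd : Differentiable ℝ (deriv γ) := hγ'.differentiable (by simp)
  have h1 : ∀ s, deriv (fun u => γ (ψ u)) s = deriv ψ s • deriv γ (ψ s) := by
    intro s
    exact (((hγd (ψ s)).hasDerivAt).scomp s (hψd s).hasDerivAt).deriv
  refine ⟨h1 t, ?_⟩
  have e : deriv (fun u => γ (ψ u)) = fun s => deriv ψ s • deriv γ (ψ s) := funext h1
  rw [e]
  have hA : HasDerivAt (deriv ψ) (deriv (deriv ψ) t) t :=
    ((hψ'.differentiable one_ne_zero) t).hasDerivAt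
  have hB : HasDerivAt (fun s => deriv γ (ψ s)) (deriv ψ t • deriv (deriv γ) (ψ t)) t :=
    ((hγ'd (ψ t)).hasDerivAt).scomp t (hψd t).hasDerivAt
  have hC : HasDerivAt (fun s => deriv ψ s • deriv γ (ψ s)) _ t := hA.smul hB
  rw [hC.deriv]
  simp [smul_smul, add_comm]

/-- Reduction of the controlled wave maps equation, for data valued in the
tangent bundle of (the image of) a closed geodesic `γ`, to a linear wave equation: with
`φ(t,x) = γ(ϕ(t,x))` and `f(t,x) = f₀(t,x) γ_s(ϕ(t,x))`, where `ϕ(t, 2π) = ϕ(t,0) + 2πK`,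
the pair `(φ, f)` solves `□φ - Π(φ)(∂_ν φ, ∂^ν φ) = χ_ω Π_T(φ) f` iff `(ϕ, f₀)` solves
`□ϕ = χ_ω f₀`. -/
theorem wave_maps_on_geodesic_reduction
    (n : ℕ) (T : Euc n → Submodule ℝ (Euc n)) (S : Fin n → Fin n → Euc n → Euc n)
    (hS_smooth : ∀ j k, ContDiff ℝ (⊤ : ℕ∞) (S j k)) (hS_symm : ∀ j k p, S j k p = S k j p)
    (γ : ℝ → Euc n) (hγ_smooth : ContDiff ℝ (⊤ : ℕ∞) γ) (hgeo : IsGeodesicEq S γ)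
    (hγ_tan : ∀ s, deriv γ s ∈ T (γ s)) (hγ' : ∀ s, deriv γ s ≠ 0)
    (χ : ℝ → ℝ) (hχ : Continuous χ) (K : ℤ)
    (ϕ f₀ : ℝ → ℝ → ℝ)
    (hϕ : ContDiff ℝ 2 (fun q : ℝ × ℝ => ϕ q.1 q.2))
    (hf₀ : Continuous (fun q : ℝ × ℝ => f₀ q.1 q.2))
    (hbc : ∀ t, ϕ t (2 * π) = ϕ t 0 + 2 * π * (K : ℝ))
    (hf₀_per : ∀ t, Periodic (f₀ t) (2 * π)) :
    (let φ : ℝ → ℝ → Euc n := fun t x => γ (ϕ t x)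
     let f : ℝ → ℝ → Euc n := fun t x => f₀ t x • deriv γ (ϕ t x)
     -- the controlled wave maps equation `□φ - Π(φ)(∂_ν φ, ∂^ν φ) = χ_ω Π_T(φ) f`
     ((∀ t x, (-(pt (pt φ) t x) + px (px φ) t x)
          + ∑ j, ∑ k, (-(pt φ t x j * pt φ t x k) + px φ t x j * px φ t x k)
              • S j k (φ t x)
          = χ x • tproj (T (φ t x)) (f t x))
       -- is equivalent to the controlled linear wave equation `□ϕ = χ_ω f₀`
       ↔ (∀ t x, -(pt (pt ϕ) t x) + px (px ϕ) t x = χ x * f₀ t x))) := by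
  intro φ f
  have main : ∀ t x,
      ((-(pt (pt φ) t x) + px (px φ) t x)
          + ∑ j, ∑ k, (-(pt φ t x j * pt φ t x k) + px φ t x j * px φ t x k)
              • S j k (φ t x)
        = χ x • tproj (T (φ t x)) (f t x))
      ↔ (-(pt (pt ϕ) t x) + px (px ϕ) t x = χ x * f₀ t x) := by
    intro t x
    have hψtC : ContDiff ℝ 2 (fun s => ϕ s x) := hϕ.comp (contDiff_id.prodMk contDiff_const)
    have hψxC : ContDiff ℝ 2 (fun y => ϕ t y) := hϕ.comp (contDiff_const.prodMk contDiff_id)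
    obtain ⟨ht1, ht2⟩ := key_chain γ hγ_smooth (fun s => ϕ s x) hψtC t
    obtain ⟨hx1, hx2⟩ := key_chain γ hγ_smooth (fun y => ϕ t y) hψxC x
    set v : Euc n := deriv γ (ϕ t x) with hv
    set w : Euc n := deriv (deriv γ) (ϕ t x) with hw
    set a : ℝ := pt ϕ t x with ha
    set b : ℝ := px ϕ t x with hb
    have e1 : pt φ t x = a • v := ht1
    have e2 : px φ t x = b • v := hx1
    have e3 : pt (pt φ) t x = pt (pt ϕ) t x • v + (a * a) • w := ht2
    have e4 : px (px φ) t x = px (px ϕ) t x • v + (b * b) • w := hx2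
    have hsum : ∑ j, ∑ k, (-(pt φ t x j * pt φ t x k) + px φ t x j * px φ t x k)
              • S j k (φ t x)
        = (b * b - a * a) • ∑ j, ∑ k, (v j * v k) • S j k (γ (ϕ t x)) := by
      rw [Finset.smul_sum]
      refine Finset.sum_congr rfl fun j _ => ?_
      rw [Finset.smul_sum]
      refine Finset.sum_congr rfl fun k _ => ?_
      rw [e1, e2, smul_smul]
      show (-((a • v) j * (a • v) k) + (b • v) j * (b • v) k) • S j k (γ (ϕ t x)) = _
      simp only [PiLp.smul_apply, smul_eq_mul]
      congr 1
      ring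
    have hgeo' : ∑ j, ∑ k, (v j * v k) • S j k (γ (ϕ t x)) = -w :=
      eq_neg_of_add_eq_zero_right (hgeo (ϕ t x))
    have hm : v ∈ T (γ (ϕ t x)) := hγ_tan _
    have erhs : χ x • tproj (T (φ t x)) (f t x) = (χ x * f₀ t x) • v := by
      have hpr : tproj (T (φ t x)) (f t x) = f₀ t x • v := by
        show (((T (γ (ϕ t x))).orthogonalProjection (f₀ t x • v) : Euc n)) = f₀ t x • v
        rw [_root_.map_smul, Submodule.coe_smul]
        congr 1
        exact (T _).starProjection_eq_self_iff.mpr hm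
      rw [hpr, smul_smul]
    rw [e3, e4, hsum, hgeo', erhs]
    have hL : -(pt (pt ϕ) t x • v + (a * a) • w) + (px (px ϕ) t x • v + (b * b) • w)
        + (b * b - a * a) • (-w) = (-(pt (pt ϕ) t x) + px (px ϕ) t x) • v := by
      module
    rw [hL]
    constructor
    · intro h
      exact smul_left_injective ℝ (hγ' (ϕ t x)) h
    · intro h
      rw [h]
  exact ⟨fun h t x => (main t x).mp (h t x), fun h t x => (main t x).mpr (h t x)⟩
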